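/- Fix an integer n ≥ 1, a real constant Λ, and a real number K ≠ 0. Let F : ℝ³ → ℝ³ be the vector field F(x, y, z) = ((1/2)x(y² + z² − x²), (1/2)y(z² + x² − y²), (1/2)n·z(x² + y² − z² − (2Λ/n)x²y²)). Then F is differentiable at (0, K, K), its total derivative there is represented by the matrix with rows (K², 0, 0), (0, −K², K²), (0, nK², −nK²), and the characteristic polynomial of this derivative is X(X − K²)(X + (n+1)K²); in particular the derivative has exactly the eigenvalues K² > 0, 0, and −(n+1)K² < 0. -/

import Mathlib

/- STATEMENT 2: the linearisation of the reduced Kähler–Einstein system at the critical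
point (0, K, K), K ≠ 0: explicit derivative matrix, characteristic polynomial
X(X - K²)(X + (n+1)K²), and the eigenvalues K² > 0, 0, -(n+1)K² < 0. -/

open Polynomial in
theorem linearisation_at_0KK
    (n : ℕ) (hn : 1 ≤ n) (Λ K : ℝ) (hK : K ≠ 0)
    (F : (Fin 3 → ℝ) → (Fin 3 → ℝ))
    (hF : ∀ p : Fin 3 → ℝ, F p =
      ![(1/2) * p 0 * (p 1 ^ 2 + p 2 ^ 2 - p 0 ^ 2),
        (1/2) * p 1 * (p 2 ^ 2 + p 0 ^ 2 - p 1 ^ 2),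
        (1/2) * (n : ℝ) * p 2 *
          (p 0 ^ 2 + p 1 ^ 2 - p 2 ^ 2 - (2 * Λ / (n : ℝ)) * p 0 ^ 2 * p 1 ^ 2)])
    (M : Matrix (Fin 3) (Fin 3) ℝ)
    (hM : M = !![K ^ 2, 0, 0;
                 0, -K ^ 2, K ^ 2;
                 0, (n : ℝ) * K ^ 2, -(n : ℝ) * K ^ 2]) :
    HasFDerivAt F (Matrix.toLin' M).toContinuousLinearMap ![0, K, K] ∧
    M.charpoly = X * (X - C (K ^ 2)) * (X + C (((n : ℝ) + 1) * K ^ 2)) ∧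
    (∀ μ : ℝ, Module.End.HasEigenvalue (Matrix.toLin' M) μ ↔
      (μ = K ^ 2 ∨ μ = 0 ∨ μ = -(((n : ℝ) + 1) * K ^ 2))) ∧
    0 < K ^ 2 ∧ -(((n : ℝ) + 1) * K ^ 2) < 0 := by
  have hn' : (0:ℝ) < (n:ℝ) := by exact_mod_cast Nat.lt_of_lt_of_le Nat.zero_lt_one hn
  have hK2 : 0 < K ^ 2 := by positivity
  refine ⟨?_, ?_, ?_, hK2, by nlinarith⟩
  · -- derivative
    have hFe : F = fun p : Fin 3 → ℝ =>
      ![(1/2) * p 0 * (p 1 ^ 2 + p 2 ^ 2 - p 0 ^ 2),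
        (1/2) * p 1 * (p 2 ^ 2 + p 0 ^ 2 - p 1 ^ 2),
        (1/2) * (n : ℝ) * p 2 *
          (p 0 ^ 2 + p 1 ^ 2 - p 2 ^ 2 - (2 * Λ / (n : ℝ)) * p 0 ^ 2 * p 1 ^ 2)] :=
      funext hF
    subst hFe
    rw [hasFDerivAt_pi']
    intro i
    set a : Fin 3 → ℝ := ![0, K, K] with ha
    have h0 : HasFDerivAt (fun p : Fin 3 → ℝ => p 0)
        (ContinuousLinearMap.proj (R := ℝ) (φ := fun _ : Fin 3 => ℝ) 0) a :=
      hasFDerivAt_apply 0 a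
    have h1 : HasFDerivAt (fun p : Fin 3 → ℝ => p 1)
        (ContinuousLinearMap.proj (R := ℝ) (φ := fun _ : Fin 3 => ℝ) 1) a :=
      hasFDerivAt_apply 1 a
    have h2 : HasFDerivAt (fun p : Fin 3 → ℝ => p 2)
        (ContinuousLinearMap.proj (R := ℝ) (φ := fun _ : Fin 3 => ℝ) 2) a :=
      hasFDerivAt_apply 2 a
    have ha0 : a 0 = 0 := rfl
    have ha1 : a 1 = K := rfl
    have ha2 : a 2 = K := rfl
    fin_cases i
    · simp only [Matrix.cons_val_zero, pow_two]
      have := ((h0.const_mul (1/2 : ℝ)).mul (((h1.mul h1).add (h2.mul h2)).sub (h0.mul h0)))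
      convert this using 1
      · rfl
      · funext x; simp
      ext v
      simp [Matrix.toLin'_apply, Matrix.mulVec, dotProduct, Fin.sum_univ_three, hM,
        ha0, ha1, ha2]
      ring
    · simp only [Matrix.cons_val_one, Matrix.head_cons, pow_two]
      have := ((h1.const_mul (1/2 : ℝ)).mul (((h2.mul h2).add (h0.mul h0)).sub (h1.mul h1)))
      convert this using 1
      · rfl
      · funext x; simp
      ext v
      simp [Matrix.toLin'_apply, Matrix.mulVec, dotProduct, Fin.sum_univ_three, hM,
        ha0, ha1, ha2]
      ring
    · simp only [Matrix.cons_val_two, Matrix.tail_cons, Matrix.head_cons, pow_two]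
      have := ((h2.const_mul ((1/2 : ℝ) * n)).mul
        ((((h0.mul h0).add (h1.mul h1)).sub (h2.mul h2)).sub
          (((h0.mul h0).const_mul (2 * Λ / (n:ℝ))).mul (h1.mul h1))))
      convert this using 1
      · rfl
      · funext x; simp
      ext v
      simp [Matrix.toLin'_apply, Matrix.mulVec, dotProduct, Fin.sum_univ_three, hM,
        ha0, ha1, ha2]
      ring
  · -- charpoly
    rw [Matrix.charpoly, Matrix.det_fin_three]
    simp [Matrix.charmatrix_apply, hM, Matrix.diagonal]
    ring
  · -- eigenvalues
    intro μ
    have key : Module.End.HasEigenvalue (Matrix.toLin' M) μ ↔ (M - μ • 1).det = 0 := by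
      rw [Module.End.hasEigenvalue_iff, Submodule.ne_bot_iff, ← Matrix.exists_mulVec_eq_zero_iff]
      constructor
      · rintro ⟨v, hv, hv0⟩
        rw [Module.End.mem_eigenspace_iff, Matrix.toLin'_apply] at hv
        exact ⟨v, hv0, by rw [Matrix.sub_mulVec, hv, Matrix.smul_mulVec,
          Matrix.one_mulVec, sub_self]⟩
      · rintro ⟨v, hv0, hv⟩
        rw [Matrix.sub_mulVec, Matrix.smul_mulVec, Matrix.one_mulVec, sub_eq_zero] at hv
        exact ⟨v, by rw [Module.End.mem_eigenspace_iff, Matrix.toLin'_apply]; exact hv, hv0⟩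
    have hdet : (M - μ • 1).det = (K ^ 2 - μ) * (μ * (μ + ((n:ℝ) + 1) * K ^ 2)) := by
      subst hM
      simp [Matrix.det_fin_three, Matrix.one_apply]
      ring
    rw [key, hdet]
    constructor
    · intro h
      rcases mul_eq_zero.mp h with h | h
      · left; linarith [sub_eq_zero.mp h]
      · rcases mul_eq_zero.mp h with h | h
        · right; left; exact h
        · right; right; linarith
    · rintro (h | h | h) <;> subst h <;> ring
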